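/- Consider the noisy CHSH game where the players share (Δ_ρ(Φ))^{⊗n}, the n-fold tensor power of the depolarized EPR pair Δ_ρ(Φ) = ρ|Φ⟩⟨Φ| + (1−ρ)I/4, with ρ ∈ (0,1). Suppose all four binary-valued observables P₀, P₁, Q₀, Q₁ (Hermitian, spectral norm ≤ 1) have normalized trace bounded in absolute value by ε_tr. Then the CHSH violation tr((P₀⊗Q₀ + P₀⊗Q₁ + P₁⊗Q₀ − P₁⊗Q₁)(Δ_ρ(Φ))^{⊗n}) is at most 2√2·ρ + √2·ε_tr²/ρ. In particular, if all observables are traceless, the maximal violation is at most 2√2·ρ. -/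

import Mathlib

open Matrix

noncomputable def specNorm {m : Type*} [Fintype m] [DecidableEq m] (M : Matrix m m ℂ) : ℝ :=
  ‖Matrix.toEuclideanCLM (𝕜 := ℂ) M‖

/-- Density matrix of the EPR pair `|Φ⟩⟨Φ|`, `Φ = (|00⟩+|11⟩)/√2`. -/
noncomputable def eprMat : Matrix (Fin 2 × Fin 2) (Fin 2 × Fin 2) ℂ :=
  fun p q => if p.1 = p.2 ∧ q.1 = q.2 then (1 / 2 : ℂ) else 0

/-- The depolarized EPR pair `Δ_ρ(Φ) = ρ|Φ⟩⟨Φ| + (1−ρ)I/4`. -/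
noncomputable def depEPR (ρ : ℝ) : Matrix (Fin 2 × Fin 2) (Fin 2 × Fin 2) ℂ :=
  (ρ : ℂ) • eprMat + (((1 - ρ) / 4 : ℝ) : ℂ) • 1

/-- `n`-fold tensor power `(Δ_ρ(Φ))^{⊗n}`, as a bipartite operator where the first
factor carries all of Alice's qubits and the second all of Bob's. -/
noncomputable def depEPRn (ρ : ℝ) (n : ℕ) :
    Matrix ((Fin n → Fin 2) × (Fin n → Fin 2)) ((Fin n → Fin 2) × (Fin n → Fin 2)) ℂ :=
  fun x y => ∏ i, depEPR ρ (x.1 i, x.2 i) (y.1 i, y.2 i)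

/-- Bipartite tensor product `P ⊗ Q` of Alice's and Bob's observables. -/
noncomputable def bkron {n : ℕ} (P Q : Matrix (Fin n → Fin 2) (Fin n → Fin 2) ℂ) :
    Matrix ((Fin n → Fin 2) × (Fin n → Fin 2)) ((Fin n → Fin 2) × (Fin n → Fin 2)) ℂ :=
  fun x y => P x.1 y.1 * Q x.2 y.2

/-!
Expanding the depolarized EPR pair in the computational basis gives
`tr((P ⊗ Q) Δ_ρ(Φ)^{⊗n}) = 2⁻ⁿ ∑ P_{uv} (T_ρ Q)_{uv}`, where `T_ρ` is the `n`-fold tensor power of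
the single-qubit depolarizing channel. In the Pauli basis `T_ρ` multiplies the coefficient of a
Pauli string of weight `w` by `ρ ^ w`, so by Parseval
`‖T_ρ Q‖²_F ≤ |tr Q|² / 2ⁿ + ρ² ‖Q‖²_F ≤ 2ⁿ (ε² + ρ²)`, using `‖Q‖²_F ≤ 2ⁿ ‖Q‖²`.
The CHSH value is `2⁻ⁿ Re(⟨P₀, T_ρ(Q₀ + Q₁)⟩ + ⟨P₁, T_ρ(Q₀ - Q₁)⟩)`. The sum-of-squares bound
`2 Re⟨P, R⟩ ≤ λ ‖P‖²_F + ‖R‖²_F / λ` with `λ = √2 ρ`, together with the parallelogram law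
`‖T_ρ(Q₀ + Q₁)‖²_F + ‖T_ρ(Q₀ - Q₁)‖²_F = 2 ‖T_ρ Q₀‖²_F + 2 ‖T_ρ Q₁‖²_F`, gives `2√2 ρ + √2 ε² / ρ`.
-/

open Finset ComplexConjugate

lemma sum_sum_prod_eq_prod_sum_sum {ι κ : Type*} [Fintype ι] [DecidableEq ι] [Fintype κ]
    (f : ι → κ → κ → ℂ) :
    ∑ u : ι → κ, ∑ v : ι → κ, ∏ i, f i (u i) (v i) = ∏ i, ∑ s, ∑ t, f i s t := by
  simp_rw [← sum_prod_piFinset univ, Fintype.piFinset_univ]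

section HilbertSchmidt

variable {m k : Type*} [Fintype m] [Fintype k]

noncomputable def frobSq (M : Matrix m k ℂ) : ℝ := ∑ i, ∑ j, ‖M i j‖ ^ 2

lemma frobSq_add_add_frobSq_sub (A B : Matrix m k ℂ) :
    frobSq (A + B) + frobSq (A - B) = 2 * frobSq A + 2 * frobSq B := by
  simp only [frobSq, Matrix.add_apply, Matrix.sub_apply, ← sum_add_distrib, mul_sum]
  refine sum_congr rfl fun i _ => sum_congr rfl fun j _ => ?_
  have := parallelogram_law_with_norm ℝ (A i j) (B i j)
  nlinarith

lemma two_mul_re_sum_mul_le {l : ℝ} (hl : 0 < l) (A B : Matrix m k ℂ) :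
    2 * (∑ i, ∑ j, A i j * B i j).re ≤ l * frobSq A + frobSq B / l := by
  have key (a b : ℂ) : 2 * (a * b).re ≤ l * ‖a‖ ^ 2 + ‖b‖ ^ 2 / l := by
    have hab : (a * b).re ≤ ‖a‖ * ‖b‖ := (Complex.re_le_norm _).trans (norm_mul a b).le
    rw [← sub_nonneg]
    have : l * ‖a‖ ^ 2 + ‖b‖ ^ 2 / l - 2 * (‖a‖ * ‖b‖) = (l * ‖a‖ - ‖b‖) ^ 2 / l := by
      field_simp; ring
    nlinarith [div_nonneg (sq_nonneg (l * ‖a‖ - ‖b‖)) hl.le]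
  simp only [frobSq, Complex.re_sum, mul_sum, sum_div, ← sum_add_distrib]
  exact sum_le_sum fun i _ => sum_le_sum fun j _ => key _ _

lemma frobSq_le_card_mul_specNorm_sq [DecidableEq m] (Q : Matrix m m ℂ) :
    frobSq Q ≤ Fintype.card m * specNorm Q ^ 2 := by
  have column (j : m) : ∑ i, ‖Q i j‖ ^ 2 ≤ specNorm Q ^ 2 := by
    have h := (Matrix.toEuclideanCLM (𝕜 := ℂ) Q).le_opNorm (PiLp.single 2 j 1)
    rw [PiLp.norm_single, norm_one, mul_one, ← specNorm, PiLp.single,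
      Matrix.toEuclideanCLM_toLp, Matrix.mulVec_single_one] at h
    have h2 := pow_le_pow_left₀ (norm_nonneg _) h 2
    rwa [EuclideanSpace.norm_sq_eq] at h2
  calc frobSq Q = ∑ j, ∑ i, ‖Q i j‖ ^ 2 := sum_comm
    _ ≤ ∑ _j : m, specNorm Q ^ 2 := sum_le_sum fun j _ => column j
    _ = Fintype.card m * specNorm Q ^ 2 := by simp

lemma frobSq_sum_smul {ι : Type*} [Fintype ι] [DecidableEq ι] (e : ι → Matrix m k ℂ) (N : ℝ)
    (he : ∀ a b, ∑ i, ∑ j, conj (e a i j) * e b i j = if a = b then (N : ℂ) else 0)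
    (c : ι → ℂ) : frobSq (∑ a, c a • e a) = N * ∑ a, ‖c a‖ ^ 2 := by
  have hM (M : Matrix m k ℂ) : (frobSq M : ℂ) = ∑ i, ∑ j, conj (M i j) * M i j := by
    simp [frobSq, Complex.conj_mul']
  apply Complex.ofReal_injective
  calc (frobSq (∑ a, c a • e a) : ℂ)
      = ∑ a, ∑ b, conj (c a) * c b * ∑ i, ∑ j, conj (e a i j) * e b i j := by
        simp only [hM, Matrix.sum_apply, Matrix.smul_apply, smul_eq_mul, map_sum, map_mul,
          sum_mul_sum]
        simp only [mul_sum]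
        rw [sum_comm_cycle]
        refine sum_congr rfl fun a _ => ?_
        rw [sum_comm_cycle]
        exact sum_congr rfl fun b _ => sum_congr rfl fun i _ => sum_congr rfl fun j _ => by ring
    _ = (N * ∑ a, ‖c a‖ ^ 2 : ℝ) := by
        simp only [he, mul_ite, mul_zero, sum_ite_eq, mem_univ, if_true, Complex.conj_mul']
        push_cast
        rw [mul_sum]
        exact sum_congr rfl fun a _ => by ring

end HilbertSchmidt

section Qubits

variable {n : ℕ}

/-- Kernel of the single-qubit depolarizing channel `M ↦ ρ M + (1 - ρ) (tr M / 2) I`. -/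
noncomputable def depolKernel (ρ : ℝ) (u v s t : Fin 2) : ℂ :=
  ρ * ((if u = s then 1 else 0) * (if v = t then 1 else 0))
    + ((1 - ρ : ℝ) : ℂ) / 2 * ((if u = v then 1 else 0) * (if s = t then 1 else 0))

/-- The paper's `Q ↦ Q'`: the `n`-fold tensor power of the depolarizing channel. -/
noncomputable def noiseOp (ρ : ℝ) :
    Matrix (Fin n → Fin 2) (Fin n → Fin 2) ℂ →ₗ[ℂ] Matrix (Fin n → Fin 2) (Fin n → Fin 2) ℂ where
  toFun Q := Matrix.of fun u v => ∑ s, ∑ t, (∏ i, depolKernel ρ (u i) (v i) (s i) (t i)) * Q s t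
  map_add' A B := by ext u v; simp [mul_add, sum_add_distrib]
  map_smul' c A := by ext u v; simp [mul_sum, mul_left_comm]

lemma noiseOp_apply (ρ : ℝ) (Q : Matrix (Fin n → Fin 2) (Fin n → Fin 2) ℂ) (u v : Fin n → Fin 2) :
    noiseOp ρ Q u v = ∑ s, ∑ t, (∏ i, depolKernel ρ (u i) (v i) (s i) (t i)) * Q s t := rfl

-- `Δ_ρ(Φ)` is, up to the factor `1/2`, the Choi matrix of the depolarizing channel.
lemma depEPR_apply (ρ : ℝ) (a b c d : Fin 2) :
    depEPR ρ (a, b) (c, d) = 2⁻¹ * depolKernel ρ c a d b := by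
  fin_cases a <;> fin_cases b <;> fin_cases c <;> fin_cases d <;>
    simp [depEPR, eprMat, depolKernel] <;> ring

lemma trace_bkron_mul_depEPRn (ρ : ℝ) (P Q : Matrix (Fin n → Fin 2) (Fin n → Fin 2) ℂ) :
    (bkron P Q * depEPRn ρ n).trace = ((2 : ℂ) ^ n)⁻¹ * ∑ u, ∑ v, P u v * noiseOp ρ Q u v := by
  have hdep (x y : (Fin n → Fin 2) × (Fin n → Fin 2)) :
      depEPRn ρ n y x = ((2 : ℂ) ^ n)⁻¹ * ∏ i, depolKernel ρ (x.1 i) (y.1 i) (x.2 i) (y.2 i) := by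
    simp [depEPRn, depEPR_apply, prod_mul_distrib]
  simp only [Matrix.trace, Matrix.diag, Matrix.mul_apply, hdep, bkron, noiseOp_apply,
    Fintype.sum_prod_type, mul_sum]
  refine sum_congr rfl fun u _ => ?_
  rw [sum_comm]
  refine sum_congr rfl fun s _ => sum_congr rfl fun v _ => sum_congr rfl fun t _ => by ring

noncomputable def pauli : Fin 4 → Matrix (Fin 2) (Fin 2) ℂ
  | 0 => !![1, 0; 0, 1]
  | 1 => !![0, 1; 1, 0]
  | 2 => !![0, -Complex.I; Complex.I, 0]
  | 3 => !![1, 0; 0, -1]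

noncomputable def pauliString (a : Fin n → Fin 4) : Matrix (Fin n → Fin 2) (Fin n → Fin 2) ℂ :=
  fun u v => ∏ i, pauli (a i) (u i) (v i)

lemma sum_conj_pauli_mul_pauli (a b : Fin 4) :
    ∑ s, ∑ t, conj (pauli a s t) * pauli b s t = if a = b then 2 else 0 := by
  fin_cases a <;> fin_cases b <;>
    simp [pauli, Fin.sum_univ_two, Complex.conj_I] <;> norm_num

lemma sum_pauli_mul_conj_pauli (s t s' t' : Fin 2) :
    ∑ a, pauli a s t * conj (pauli a s' t') = if s = s' ∧ t = t' then 2 else 0 := by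
  fin_cases s <;> fin_cases t <;> fin_cases s' <;> fin_cases t' <;>
    simp [pauli, Fin.sum_univ_four, Complex.conj_I] <;> norm_num

lemma sum_depolKernel_mul_pauli (ρ : ℝ) (c : Fin 4) (u v : Fin 2) :
    ∑ s, ∑ t, depolKernel ρ u v s t * pauli c s t
      = (if c = 0 then 1 else (ρ : ℂ)) * pauli c u v := by
  fin_cases c <;> fin_cases u <;> fin_cases v <;>
    simp [depolKernel, pauli, Fin.sum_univ_two] <;> ring

lemma pauliString_zero : pauliString (0 : Fin n → Fin 4) = 1 := by
  ext u v
  have hI : pauli 0 = 1 := Matrix.one_fin_two.symm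
  simp [pauliString, hI, Matrix.one_apply, Fintype.prod_boole, funext_iff]

lemma sum_conj_pauliString_mul_pauliString (a b : Fin n → Fin 4) :
    ∑ u, ∑ v, conj (pauliString a u v) * pauliString b u v = if a = b then 2 ^ n else 0 := by
  simp only [pauliString, map_prod, ← prod_mul_distrib]
  rw [sum_sum_prod_eq_prod_sum_sum (fun i s t => conj (pauli (a i) s t) * pauli (b i) s t)]
  simp only [sum_conj_pauli_mul_pauli, Fintype.prod_ite_zero, prod_const, card_univ,
    Fintype.card_fin, funext_iff]

lemma sum_pauliString_mul_conj_pauliString (u v u' v' : Fin n → Fin 2) :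
    ∑ a, pauliString a u v * conj (pauliString a u' v') = if u = u' ∧ v = v' then 2 ^ n else 0 := by
  simp only [pauliString, map_prod, ← prod_mul_distrib]
  rw [← Fintype.prod_sum (fun i c => pauli c (u i) (v i) * conj (pauli c (u' i) (v' i)))]
  simp only [sum_pauli_mul_conj_pauli, Fintype.prod_ite_zero, prod_const, card_univ,
    Fintype.card_fin, funext_iff, forall_and]

noncomputable def pauliCoeff (Q : Matrix (Fin n → Fin 2) (Fin n → Fin 2) ℂ)
    (a : Fin n → Fin 4) : ℂ :=
  ((2 : ℂ) ^ n)⁻¹ * ∑ u, ∑ v, conj (pauliString a u v) * Q u v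

lemma sum_pauliCoeff_smul_pauliString (Q : Matrix (Fin n → Fin 2) (Fin n → Fin 2) ℂ) :
    ∑ a, pauliCoeff Q a • pauliString a = Q := by
  ext u v
  calc (∑ a, pauliCoeff Q a • pauliString a) u v
      = ((2 : ℂ) ^ n)⁻¹ *
          ∑ u', ∑ v', Q u' v' * ∑ a, pauliString a u v * conj (pauliString a u' v') := by
        simp only [Matrix.sum_apply, Matrix.smul_apply, smul_eq_mul, pauliCoeff, mul_sum, sum_mul]
        rw [← sum_comm_cycle]
        exact sum_congr rfl fun u' _ => sum_congr rfl fun v' _ => sum_congr rfl fun a _ => by ring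
    _ = Q u v := by
        simp only [sum_pauliString_mul_conj_pauliString, ite_and, mul_ite, mul_zero, sum_ite_irrel,
          sum_ite_eq, mem_univ, if_true, sum_const_zero]
        field_simp

lemma pauliCoeff_zero (Q : Matrix (Fin n → Fin 2) (Fin n → Fin 2) ℂ) :
    pauliCoeff Q 0 = ((2 : ℂ) ^ n)⁻¹ * Q.trace := by
  simp [pauliCoeff, pauliString_zero, Matrix.one_apply, Matrix.trace]

def pauliWeight (a : Fin n → Fin 4) : ℕ := #{i | a i ≠ 0}

lemma noiseOp_pauliString (ρ : ℝ) (a : Fin n → Fin 4) :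
    noiseOp ρ (pauliString a) = (ρ : ℂ) ^ pauliWeight a • pauliString a := by
  ext u v
  simp only [noiseOp_apply, pauliString, ← prod_mul_distrib]
  rw [sum_sum_prod_eq_prod_sum_sum (fun i s t => depolKernel ρ (u i) (v i) s t * pauli (a i) s t)]
  simp only [sum_depolKernel_mul_pauli, prod_mul_distrib, prod_ite, prod_const_one, one_mul,
    prod_const, pauliWeight, Matrix.smul_apply, smul_eq_mul]
  rfl

lemma noiseOp_eq_sum (ρ : ℝ) (Q : Matrix (Fin n → Fin 2) (Fin n → Fin 2) ℂ) :
    noiseOp ρ Q = ∑ a, (pauliCoeff Q a * (ρ : ℂ) ^ pauliWeight a) • pauliString a := by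
  conv_lhs => rw [← sum_pauliCoeff_smul_pauliString Q]
  simp only [map_sum, map_smul, noiseOp_pauliString, smul_smul]

lemma frobSq_eq_sum_pauliCoeff (c : (Fin n → Fin 4) → ℂ) :
    frobSq (∑ a, c a • pauliString a) = 2 ^ n * ∑ a, ‖c a‖ ^ 2 :=
  frobSq_sum_smul _ _ (fun a b => by simp [sum_conj_pauliString_mul_pauliString]) c

lemma sq_pow_pauliWeight_le {ρ : ℝ} (hρ0 : 0 ≤ ρ) (hρ1 : ρ ≤ 1) (a : Fin n → Fin 4) :
    (ρ ^ 2) ^ pauliWeight a ≤ ρ ^ 2 + if a = 0 then 1 else 0 := by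
  split_ifs with ha
  · have hw : pauliWeight a = 0 := by simp [pauliWeight, ha]
    rw [hw, pow_zero]
    linarith [sq_nonneg ρ]
  · have hw : pauliWeight a ≠ 0 := by
      simpa [pauliWeight, funext_iff] using ha
    have := pow_le_pow_of_le_one (sq_nonneg ρ) (by nlinarith) (Nat.one_le_iff_ne_zero.mpr hw)
    simpa using this

lemma frobSq_noiseOp_le {ρ : ℝ} (hρ0 : 0 ≤ ρ) (hρ1 : ρ ≤ 1)
    (Q : Matrix (Fin n → Fin 2) (Fin n → Fin 2) ℂ) :
    frobSq (noiseOp ρ Q) ≤ ‖Q.trace‖ ^ 2 / 2 ^ n + ρ ^ 2 * frobSq Q := by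
  have hQ := frobSq_eq_sum_pauliCoeff (pauliCoeff Q)
  rw [sum_pauliCoeff_smul_pauliString] at hQ
  rw [noiseOp_eq_sum, frobSq_eq_sum_pauliCoeff, hQ]
  have hterm (a : Fin n → Fin 4) : ‖pauliCoeff Q a * (ρ : ℂ) ^ pauliWeight a‖ ^ 2
      ≤ ρ ^ 2 * ‖pauliCoeff Q a‖ ^ 2 + if a = 0 then ‖pauliCoeff Q a‖ ^ 2 else 0 := by
    have := mul_le_mul_of_nonneg_left (sq_pow_pauliWeight_le hρ0 hρ1 a) (sq_nonneg ‖pauliCoeff Q a‖)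
    rw [norm_mul, norm_pow, Complex.norm_real, Real.norm_of_nonneg hρ0, mul_pow, ← pow_mul,
      mul_comm (pauliWeight a), pow_mul]
    split_ifs at this ⊢ <;> linarith
  calc 2 ^ n * ∑ a, ‖pauliCoeff Q a * (ρ : ℂ) ^ pauliWeight a‖ ^ 2
      ≤ 2 ^ n * (ρ ^ 2 * ∑ a, ‖pauliCoeff Q a‖ ^ 2 + ‖pauliCoeff Q 0‖ ^ 2) := by
        gcongr
        refine (sum_le_sum fun a _ => hterm a).trans_eq ?_
        rw [sum_add_distrib, ← mul_sum, sum_ite_eq' univ (0 : Fin n → Fin 4), if_pos (mem_univ _)]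
    _ = ‖Q.trace‖ ^ 2 / 2 ^ n + ρ ^ 2 * (2 ^ n * ∑ a, ‖pauliCoeff Q a‖ ^ 2) := by
        rw [pauliCoeff_zero, norm_mul, norm_inv, norm_pow, Complex.norm_ofNat]
        field_simp
        ring

lemma frobSq_le_two_pow_of_specNorm_le_one {Q : Matrix (Fin n → Fin 2) (Fin n → Fin 2) ℂ}
    (hQ : specNorm Q ≤ 1) : frobSq Q ≤ 2 ^ n := by
  have h := frobSq_le_card_mul_specNorm_sq Q
  have : specNorm Q ^ 2 ≤ 1 := pow_le_one₀ (norm_nonneg _) hQ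
  simp only [Fintype.card_pi, Fintype.card_fin, prod_const, card_univ, Nat.cast_pow,
    Nat.cast_ofNat] at h
  nlinarith [pow_pos (two_pos (α := ℝ)) n]

lemma frobSq_noiseOp_le_of_specNorm_le_one {ρ ε : ℝ} (hρ0 : 0 ≤ ρ) (hρ1 : ρ ≤ 1)
    {Q : Matrix (Fin n → Fin 2) (Fin n → Fin 2) ℂ} (hQ : specNorm Q ≤ 1)
    (htr : ‖Q.trace‖ / 2 ^ n ≤ ε) :
    frobSq (noiseOp ρ Q) ≤ 2 ^ n * (ε ^ 2 + ρ ^ 2) := by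
  have hN : (0 : ℝ) < 2 ^ n := by positivity
  have htr' : ‖Q.trace‖ ^ 2 / 2 ^ n ≤ 2 ^ n * ε ^ 2 := by
    rw [div_le_iff₀ hN] at htr ⊢
    nlinarith [norm_nonneg Q.trace]
  nlinarith [frobSq_noiseOp_le hρ0 hρ1 Q, frobSq_le_two_pow_of_specNorm_le_one hQ]

lemma chsh_trace_eq (ρ : ℝ) (P₀ P₁ Q₀ Q₁ : Matrix (Fin n → Fin 2) (Fin n → Fin 2) ℂ) :
    ((bkron P₀ Q₀ + bkron P₀ Q₁ + bkron P₁ Q₀ - bkron P₁ Q₁) * depEPRn ρ n).trace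
      = ((2 : ℝ) ^ n)⁻¹ • ((∑ u, ∑ v, P₀ u v * noiseOp ρ (Q₀ + Q₁) u v)
          + ∑ u, ∑ v, P₁ u v * noiseOp ρ (Q₀ - Q₁) u v) := by
  simp only [add_mul, sub_mul, Matrix.trace_add, Matrix.trace_sub, trace_bkron_mul_depEPRn,
    map_add, map_sub, Matrix.add_apply, Matrix.sub_apply, mul_add, mul_sub, sum_add_distrib,
    sum_sub_distrib, Complex.real_smul]
  push_cast
  ring

lemma two_mul_two_pow_mul_re_chsh_le {ρ l : ℝ} (hl : 0 < l)
    (P₀ P₁ Q₀ Q₁ : Matrix (Fin n → Fin 2) (Fin n → Fin 2) ℂ) :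
    2 * 2 ^ n * (((bkron P₀ Q₀ + bkron P₀ Q₁ + bkron P₁ Q₀ - bkron P₁ Q₁)
        * depEPRn ρ n).trace).re
      ≤ l * (frobSq P₀ + frobSq P₁) + 2 * (frobSq (noiseOp ρ Q₀) + frobSq (noiseOp ρ Q₁)) / l := by
  have h₀ := two_mul_re_sum_mul_le hl P₀ (noiseOp ρ (Q₀ + Q₁))
  have h₁ := two_mul_re_sum_mul_le hl P₁ (noiseOp ρ (Q₀ - Q₁))
  have hpar : 2 * (frobSq (noiseOp ρ Q₀) + frobSq (noiseOp ρ Q₁)) / l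
      = frobSq (noiseOp ρ (Q₀ + Q₁)) / l + frobSq (noiseOp ρ (Q₀ - Q₁)) / l := by
    rw [map_add, map_sub, ← add_div, frobSq_add_add_frobSq_sub, mul_add]
  have h2n : (2 : ℝ) ^ n ≠ 0 := by positivity
  rw [chsh_trace_eq, Complex.smul_re, smul_eq_mul, Complex.add_re, mul_assoc,
    mul_inv_cancel_left₀ h2n, hpar]
  linarith

end Qubits

theorem stmt18 (n : ℕ) (ρ : ℝ) (hρ0 : 0 < ρ) (hρ1 : ρ < 1) (εtr : ℝ)
    (P₀ P₁ Q₀ Q₁ : Matrix (Fin n → Fin 2) (Fin n → Fin 2) ℂ)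
    (hnP₀ : specNorm P₀ ≤ 1) (hnP₁ : specNorm P₁ ≤ 1)
    (hnQ₀ : specNorm Q₀ ≤ 1) (hnQ₁ : specNorm Q₁ ≤ 1)
    (htrQ₀ : ‖Q₀.trace‖ / 2 ^ n ≤ εtr) (htrQ₁ : ‖Q₁.trace‖ / 2 ^ n ≤ εtr) :
    (((bkron P₀ Q₀ + bkron P₀ Q₁ + bkron P₁ Q₀ - bkron P₁ Q₁) * depEPRn ρ n).trace).re ≤
      2 * Real.sqrt 2 * ρ + Real.sqrt 2 * εtr ^ 2 / ρ := by
  have hl : 0 < Real.sqrt 2 * ρ := by positivity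
  have hP := add_le_add (frobSq_le_two_pow_of_specNorm_le_one hnP₀)
    (frobSq_le_two_pow_of_specNorm_le_one hnP₁)
  have hQ := add_le_add (frobSq_noiseOp_le_of_specNorm_le_one hρ0.le hρ1.le hnQ₀ htrQ₀)
    (frobSq_noiseOp_le_of_specNorm_le_one hρ0.le hρ1.le hnQ₁ htrQ₁)
  calc _ ≤ (Real.sqrt 2 * ρ * (2 ^ n + 2 ^ n)
          + 2 * (2 ^ n * (εtr ^ 2 + ρ ^ 2) + 2 ^ n * (εtr ^ 2 + ρ ^ 2)) / (Real.sqrt 2 * ρ))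
          / (2 * 2 ^ n) := by
        rw [le_div_iff₀ (by positivity), mul_comm]
        exact (two_mul_two_pow_mul_re_chsh_le hl P₀ P₁ Q₀ Q₁).trans (by gcongr)
    _ = 2 * Real.sqrt 2 * ρ + Real.sqrt 2 * εtr ^ 2 / ρ := by
        have h2 : Real.sqrt 2 ^ 2 = 2 := Real.sq_sqrt zero_le_two
        field_simp
        rw [h2]
        ring
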